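/- arXiv:2509.06151 — 3 statements merged into one kernel-verified Lean document; each statement's English description precedes it below -/
import Mathlib

section
/- Fix t > 0 and nonnegative sequences λ, a, b : ℕ → ℝ such that the series ∑_i exp(−(t/2)·λ_i)·a_i² and ∑_i exp(−t·λ_i)·b_i² converge. Let B = sup_{x ≥ 0} x²·e^{−x/2}. Then the series ∑_i λ_i·exp(−t·λ_i)·a_i·b_i converges and ∑_i λ_i·exp(−t·λ_i)·a_i·b_i ≤ B^{1/2}·t^{−1}·(∑_i exp(−(t/2)·λ_i)·a_i²)^{1/2}·(∑_i exp(−t·λ_i)·b_i²)^{1/2}. -/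
/-!
Put `u i = exp (-(t/4) λᵢ) aᵢ` and `v i = exp (-(t/2) λᵢ) bᵢ`, whose squares are the two given
summands. Then `λᵢ exp (-t λᵢ) aᵢ bᵢ = (λᵢ exp (-(t/4) λᵢ)) uᵢ vᵢ`, and the first factor is at most
`√B / t` because its square is `t⁻² (tλᵢ)² exp (-tλᵢ/2) ≤ t⁻² B`. Cauchy–Schwarz for `∑ uᵢ vᵢ`
finishes the proof.
-/

open Real

theorem bddAbove_sq_mul_exp_neg_half :
    BddAbove ((fun x : ℝ => x ^ 2 * exp (-x / 2)) '' Set.Ici 0) := by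
  refine ⟨16, ?_⟩
  rintro _ ⟨x, hx, rfl⟩
  have hsq : x ^ 2 ≤ 16 * exp (x / 2) := by
    have hx4 : x / 4 ≤ exp (x / 4) := by linarith [add_one_le_exp (x / 4)]
    calc x ^ 2 = 16 * (x / 4) ^ 2 := by ring
      _ ≤ 16 * exp (x / 4) ^ 2 := by gcongr; exact div_nonneg hx (by norm_num)
      _ = 16 * exp (x / 2) := by rw [← exp_nat_mul]; ring_nf
  calc x ^ 2 * exp (-x / 2) ≤ 16 * exp (x / 2) * exp (-x / 2) := by gcongr
    _ = 16 := by rw [mul_assoc, ← exp_add]; ring_nf; simp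

theorem mul_exp_neg_quarter_le_sqrt_sSup {x : ℝ} (hx : 0 ≤ x) :
    x * exp (-x / 4) ≤ √(sSup ((fun x : ℝ => x ^ 2 * exp (-x / 2)) '' Set.Ici 0)) := by
  refine le_sqrt_of_sq_le ?_
  calc (x * exp (-x / 4)) ^ 2 = x ^ 2 * exp (-x / 2) := by
        rw [mul_pow, ← exp_nat_mul]; ring_nf
    _ ≤ _ := le_csSup bddAbove_sq_mul_exp_neg_half ⟨x, hx, rfl⟩

theorem summable_mul_and_tsum_mul_le_sqrt_mul_sqrt {ι : Type*} {u v : ι → ℝ}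
    (hu : ∀ i, 0 ≤ u i) (hv : ∀ i, 0 ≤ v i)
    (hsu : Summable fun i => u i ^ 2) (hsv : Summable fun i => v i ^ 2) :
    (Summable fun i => u i * v i) ∧
      ∑' i, u i * v i ≤ √(∑' i, u i ^ 2) * √(∑' i, v i ^ 2) := by
  have := Real.summable_and_inner_le_Lp_mul_Lq_tsum_of_nonneg HolderConjugate.two_two hu hv
    (by simpa only [rpow_two] using hsu) (by simpa only [rpow_two] using hsv)
  simpa only [rpow_two, sqrt_eq_rpow] using this

theorem mul_exp_neg_quarter_mul_le {t l : ℝ} (ht : 0 < t) (hl : 0 ≤ l) :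
    l * exp (-(t / 4) * l) ≤
      √(sSup ((fun x : ℝ => x ^ 2 * exp (-x / 2)) '' Set.Ici 0)) * t⁻¹ := by
  rw [← div_eq_mul_inv, le_div_iff₀ ht]
  calc l * exp (-(t / 4) * l) * t = t * l * exp (-(t * l) / 4) := by ring_nf
    _ ≤ _ := mul_exp_neg_quarter_le_sqrt_sSup (mul_nonneg ht.le hl)

theorem mul_exp_neg_mul_mul_mul_le {t l x y : ℝ} (ht : 0 < t) (hl : 0 ≤ l) (hx : 0 ≤ x)
    (hy : 0 ≤ y) :
    l * exp (-t * l) * x * y ≤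
      √(sSup ((fun x : ℝ => x ^ 2 * exp (-x / 2)) '' Set.Ici 0)) * t⁻¹ *
        (exp (-(t / 4) * l) * x * (exp (-(t / 2) * l) * y)) := by
  have hexp : exp (-t * l) = exp (-(t / 4) * l) * exp (-(t / 4) * l) * exp (-(t / 2) * l) := by
    rw [← exp_add, ← exp_add]; ring_nf
  calc l * exp (-t * l) * x * y
      = l * exp (-(t / 4) * l) * (exp (-(t / 4) * l) * x * (exp (-(t / 2) * l) * y)) := by
        rw [hexp]; ring
    _ ≤ _ := mul_le_mul_of_nonneg_right (mul_exp_neg_quarter_mul_le ht hl) (by positivity)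

/-- Spectral Cauchy–Schwarz estimate for the heat-kernel derivative:
for `t > 0` and nonnegative sequences `lam`, `a`, `b` with the indicated
summability, the series `∑ i, lam i * exp (-t * lam i) * a i * b i` converges
and is bounded by `√B * t⁻¹ * (∑ exp(-(t/2)λᵢ) aᵢ²)^{1/2} * (∑ exp(-tλᵢ) bᵢ²)^{1/2}`,
where `B = sup_{x ≥ 0} x² e^{-x/2}`. -/
theorem stmt0 (t : ℝ) (ht : 0 < t) (lam a b : ℕ → ℝ)
    (hlam : ∀ i, 0 ≤ lam i) (ha : ∀ i, 0 ≤ a i) (hb : ∀ i, 0 ≤ b i)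
    (hsa : Summable fun i => Real.exp (-(t / 2) * lam i) * a i ^ 2)
    (hsb : Summable fun i => Real.exp (-t * lam i) * b i ^ 2) :
    (Summable fun i => lam i * Real.exp (-t * lam i) * a i * b i) ∧
      (∑' i, lam i * Real.exp (-t * lam i) * a i * b i) ≤
        Real.sqrt (sSup ((fun x : ℝ => x ^ 2 * Real.exp (-x / 2)) '' Set.Ici 0)) * t⁻¹ *
          Real.sqrt (∑' i, Real.exp (-(t / 2) * lam i) * a i ^ 2) *
          Real.sqrt (∑' i, Real.exp (-t * lam i) * b i ^ 2) := by
  set C := √(sSup ((fun x : ℝ => x ^ 2 * exp (-x / 2)) '' Set.Ici 0)) * t⁻¹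
  set u := fun i => exp (-(t / 4) * lam i) * a i
  set v := fun i => exp (-(t / 2) * lam i) * b i
  have hu2 : (fun i => u i ^ 2) = fun i => exp (-(t / 2) * lam i) * a i ^ 2 := by
    ext i; rw [mul_pow, ← exp_nat_mul]; ring_nf
  have hv2 : (fun i => v i ^ 2) = fun i => exp (-t * lam i) * b i ^ 2 := by
    ext i; rw [mul_pow, ← exp_nat_mul]; ring_nf
  obtain ⟨hsuv, hcs⟩ := summable_mul_and_tsum_mul_le_sqrt_mul_sqrt
    (fun i => mul_nonneg (exp_nonneg _) (ha i)) (fun i => mul_nonneg (exp_nonneg _) (hb i))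
    (hu2 ▸ hsa) (hv2 ▸ hsb)
  have hterm : ∀ i, lam i * exp (-t * lam i) * a i * b i ≤ C * (u i * v i) := fun i =>
    mul_exp_neg_mul_mul_mul_le ht (hlam i) (ha i) (hb i)
  have hsum : Summable fun i => lam i * exp (-t * lam i) * a i * b i :=
    (hsuv.mul_left C).of_nonneg_of_le
      (fun i => mul_nonneg (mul_nonneg (mul_nonneg (hlam i) (exp_nonneg _)) (ha i)) (hb i)) hterm
  refine ⟨hsum, ?_⟩
  calc ∑' i, lam i * exp (-t * lam i) * a i * b i ≤ ∑' i, C * (u i * v i) :=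
        hsum.tsum_le_tsum hterm (hsuv.mul_left C)
    _ = C * ∑' i, u i * v i := tsum_mul_left
    _ ≤ C * (√(∑' i, u i ^ 2) * √(∑' i, v i ^ 2)) := by gcongr
    _ = _ := by rw [hu2, hv2, ← mul_assoc]
end

section
/- Let λ₀ > 0 and A > 0. Let λ₁ ≤ λ₂ ≤ λ₃ ≤ ⋯ be a nondecreasing sequence of reals with λ_k ≥ λ₀ for all k ≥ 1, and assume that for every t ∈ (0,1] the series ∑_{i=1}^∞ exp(−t·λ_i) converges and is at most A/t. Then λ_k ≥ (λ₀·e^{−λ₀}/A)·k for every k ≥ 1. -/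
open Real

lemma Antitone.succ_mul_le_tsum {f : ℕ → ℝ} (hf : Antitone f) (hf0 : ∀ i, 0 ≤ f i)
    (hs : Summable f) (n : ℕ) : (n + 1) * f n ≤ ∑' i, f i :=
  calc (n + 1 : ℝ) * f n = (Finset.range (n + 1)).card • f n := by simp
    _ ≤ ∑ i ∈ Finset.range (n + 1), f i :=
      Finset.card_nsmul_le_sum _ _ _ fun _ hi => hf (Finset.mem_range_succ_iff.mp hi)
    _ ≤ ∑' i, f i := hs.sum_le_tsum _ fun i _ => hf0 i

lemma Monotone.succ_mul_exp_le_tsum_exp {μ : ℕ → ℝ} (hμ : Monotone μ) {t : ℝ} (ht : 0 ≤ t)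
    (hs : Summable fun i => exp (-t * μ i)) (n : ℕ) :
    (n + 1) * exp (-t * μ n) ≤ ∑' i, exp (-t * μ i) :=
  Antitone.succ_mul_le_tsum
    (fun _ _ hij => exp_le_exp.2 <| by nlinarith [hμ hij]) (fun _ => (exp_pos _).le) hs n

/-- The time `t = λ₀ / λₙ` is chosen so that the first `n + 1` terms of the trace are each at
least `exp (-λ₀)`. -/
theorem Monotone.mul_le_of_heat_trace_le {μ : ℕ → ℝ} (hμ : Monotone μ) {lam0 A : ℝ}
    (hlam0 : 0 < lam0) (hlb : ∀ i, lam0 ≤ μ i)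
    (htrace : ∀ t : ℝ, 0 < t → t ≤ 1 →
      (Summable fun i => exp (-t * μ i)) ∧ ∑' i, exp (-t * μ i) ≤ A / t) (n : ℕ) :
    lam0 * exp (-lam0) / A * (n + 1) ≤ μ n := by
  have hμn : 0 < μ n := hlam0.trans_le (hlb n)
  have hA : 0 ≤ A := by
    simpa using (tsum_nonneg fun i => (exp_pos _).le).trans (htrace 1 one_pos le_rfl).2
  set t := lam0 / μ n
  have ht0 : 0 < t := div_pos hlam0 hμn
  have htμ : t * μ n = lam0 := div_mul_cancel₀ _ hμn.ne'
  obtain ⟨hs, hb⟩ := htrace t ht0 ((div_le_one hμn).2 (hlb n))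
  have hcount : (n + 1) * exp (-lam0) ≤ A * μ n / lam0 :=
    calc (n + 1) * exp (-lam0) = (n + 1) * exp (-t * μ n) := by rw [neg_mul, htμ]
      _ ≤ A / t := (hμ.succ_mul_exp_le_tsum_exp ht0.le hs n).trans hb
      _ = A * μ n / lam0 := div_div_eq_mul_div _ _ _
  rw [le_div_iff₀ hlam0] at hcount
  rw [div_mul_eq_mul_div]
  exact div_le_of_le_mul₀ hA hμn.le (by linarith)

theorem stmt1_general (lam0 A : ℝ) (hlam0 : 0 < lam0)
    (lam : ℕ → ℝ)
    (hmono : ∀ k : ℕ, 1 ≤ k → lam k ≤ lam (k + 1))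
    (hlb : ∀ k : ℕ, 1 ≤ k → lam0 ≤ lam k)
    (htrace : ∀ t : ℝ, 0 < t → t ≤ 1 →
      (Summable fun i : ℕ => Real.exp (-t * lam (i + 1))) ∧
        (∑' i : ℕ, Real.exp (-t * lam (i + 1))) ≤ A / t) :
    ∀ k : ℕ, 1 ≤ k → lam0 * Real.exp (-lam0) / A * k ≤ lam k := by
  intro k hk
  obtain ⟨n, rfl⟩ := Nat.exists_eq_add_of_le' hk
  have hμ : Monotone fun i => lam (i + 1) :=
    monotone_nat_of_le_succ fun i => hmono (i + 1) le_add_self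
  exact_mod_cast hμ.mul_le_of_heat_trace_le hlam0 (fun i => hlb (i + 1) le_add_self) htrace n

/-- Eigenvalue growth from a heat trace bound: if `λ₁ ≤ λ₂ ≤ ⋯` is a
nondecreasing sequence with `λ_k ≥ λ₀ > 0` for `k ≥ 1`, and for every
`t ∈ (0, 1]` the series `∑_{i=1}^∞ exp (-t λ_i)` converges with sum at most
`A / t`, then `λ_k ≥ (λ₀ e^{-λ₀} / A) k` for every `k ≥ 1`. -/
theorem stmt1 (lam0 A : ℝ) (hlam0 : 0 < lam0) (hA : 0 < A)
    (lam : ℕ → ℝ)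
    (hmono : ∀ k : ℕ, 1 ≤ k → lam k ≤ lam (k + 1))
    (hlb : ∀ k : ℕ, 1 ≤ k → lam0 ≤ lam k)
    (htrace : ∀ t : ℝ, 0 < t → t ≤ 1 →
      (Summable fun i : ℕ => Real.exp (-t * lam (i + 1))) ∧
        (∑' i : ℕ, Real.exp (-t * lam (i + 1))) ≤ A / t) :
    ∀ k : ℕ, 1 ≤ k → lam0 * Real.exp (-lam0) / A * k ≤ lam k :=
  stmt1_general lam0 A hlam0 lam hmono hlb htrace
end

section
/- Let n ∈ ℕ and k ≤ n. Let A and B be Hermitian n×n complex matrices such that A_{ij} = 0 whenever i ≤ k or j ≤ k, the top-left block (B_{ij})_{1≤i,j≤k} is positive definite, and the bottom-right block (A_{ij})_{k<i,j≤n} is positive definite. Let E : ℝ → M_n(ℂ) be a matrix-valued function with E(L) → 0 as L → +∞. Then det(L·A + B + E(L))/L^{n−k} converges, as L → +∞, to det((B_{ij})_{1≤i,j≤k})·det((A_{ij})_{k<i,j≤n}), and this limit is a positive real number. -/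
/-!
Reindex `Fin n` as `Fin k ⊕ Fin (n - k)`, so that `A` becomes `fromBlocks 0 0 0 D` with `D` the
positive definite block of `A`. Multiplying the last `n - k` rows of `L • A + B + E L` by `L⁻¹`
divides the determinant by `L ^ (n - k)` and turns the matrix into
`fromBlocks 0 0 0 D + fromBlocks 1 0 0 (L⁻¹ • 1) * (B + E L)`, which converges to the block upper
triangular matrix `fromBlocks B₁₁ B₁₂ 0 D`. Positivity of the limit is that of the determinants
of positive definite matrices.
-/

open scoped ComplexOrder

/-- The embedding of the last `n - k` indices `{k, …, n-1}` into `Fin n`. -/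
def lowerEmbed (n k : ℕ) (hk : k ≤ n) : Fin (n - k) → Fin n :=
  fun i => ⟨k + i, by have := i.isLt; omega⟩

open Filter Topology Bornology Matrix

namespace Matrix

variable {K : Type*} {m p : Type*} [Fintype m] [Fintype p] [DecidableEq m] [DecidableEq p]

theorem det_fromBlocks_one_zero_zero_smul_one [CommRing K] (t : K) :
    (fromBlocks 1 0 0 (t • 1) : Matrix (m ⊕ p) (m ⊕ p) K).det = t ^ Fintype.card p := by
  rw [det_fromBlocks_zero₂₁, det_one, one_mul, det_smul, det_one, mul_one]

theorem det_smul_fromBlocks_zero_add [Field K] {c : K} (hc : c ≠ 0) (D : Matrix p p K)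
    (M : Matrix (m ⊕ p) (m ⊕ p) K) :
    (c • fromBlocks 0 0 0 D + M).det / c ^ Fintype.card p =
      (fromBlocks 0 0 0 D + fromBlocks 1 0 0 (c⁻¹ • 1) * M).det := by
  have hscale : fromBlocks 1 0 0 (c⁻¹ • 1) * (c • fromBlocks 0 0 0 D + M) =
      fromBlocks 0 0 0 D + fromBlocks 1 0 0 (c⁻¹ • 1) * M := by
    simp [mul_add, fromBlocks_smul, fromBlocks_multiply, smul_smul, hc]
  rw [← hscale, det_mul, det_fromBlocks_one_zero_zero_smul_one, inv_pow, inv_mul_eq_div]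

theorem det_fromBlocks_zero_add_fromBlocks_one_zero_mul [CommRing K] (D : Matrix p p K)
    (M : Matrix (m ⊕ p) (m ⊕ p) K) :
    (fromBlocks 0 0 0 D + fromBlocks 1 0 0 0 * M).det = M.toBlocks₁₁.det * D.det := by
  conv_lhs => rw [← fromBlocks_toBlocks M]
  simp [fromBlocks_multiply, fromBlocks_add, det_fromBlocks_zero₂₁]

theorem tendsto_det_smul_fromBlocks_zero_add_div_pow [NormedField K] {α : Type*} {l : Filter α}
    {c : α → K} (hc : Tendsto c l (cobounded K)) (D : Matrix p p K)
    {M : α → Matrix (m ⊕ p) (m ⊕ p) K} {M₀ : Matrix (m ⊕ p) (m ⊕ p) K}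
    (hM : Tendsto M l (𝓝 M₀)) :
    Tendsto (fun x ↦ (c x • fromBlocks 0 0 0 D + M x).det / c x ^ Fintype.card p) l
      (𝓝 (M₀.toBlocks₁₁.det * D.det)) := by
  have hS : Continuous fun t : K ↦ (fromBlocks 1 0 0 (t • 1) : Matrix (m ⊕ p) (m ⊕ p) K) :=
    continuous_const.matrix_fromBlocks continuous_const continuous_const
      (continuous_id.smul continuous_const)
  have hlim : Tendsto (fun x ↦ fromBlocks 0 0 0 D + fromBlocks 1 0 0 ((c x)⁻¹ • 1) * M x) l
      (𝓝 (fromBlocks 0 0 0 D + fromBlocks 1 0 0 0 * M₀)) := by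
    simpa using tendsto_const_nhds.add
      (((hS.tendsto 0).comp (tendsto_inv₀_cobounded.comp hc)).mul hM)
  rw [← det_fromBlocks_zero_add_fromBlocks_one_zero_mul]
  refine ((continuous_id.matrix_det.tendsto _).comp hlim).congr' ?_
  filter_upwards [hc.eventually_ne_cobounded 0] with x hx
  exact (det_smul_fromBlocks_zero_add hx D (M x)).symm

end Matrix

section Reindex

variable {n k : ℕ} (hk : k ≤ n)

def finSumFinSubEquiv : Fin k ⊕ Fin (n - k) ≃ Fin n :=
  finSumFinEquiv.trans (finCongr (Nat.add_sub_cancel' hk))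

@[simp]
theorem finSumFinSubEquiv_inl (i : Fin k) :
    finSumFinSubEquiv hk (Sum.inl i) = Fin.castLE hk i := by
  ext; simp [finSumFinSubEquiv]

@[simp]
theorem finSumFinSubEquiv_inr (j : Fin (n - k)) :
    finSumFinSubEquiv hk (Sum.inr j) = lowerEmbed n k hk j := by
  ext; simp [finSumFinSubEquiv, lowerEmbed]

variable {R : Type*}

theorem toBlocks₁₁_submatrix_finSumFinSubEquiv (B : Matrix (Fin n) (Fin n) R) :
    (B.submatrix (finSumFinSubEquiv hk) (finSumFinSubEquiv hk)).toBlocks₁₁ =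
      B.submatrix (Fin.castLE hk) (Fin.castLE hk) := by
  ext; simp [toBlocks₁₁]

theorem submatrix_finSumFinSubEquiv_eq_fromBlocks [Zero R] {A : Matrix (Fin n) (Fin n) R}
    (hA : ∀ i j : Fin n, (i : ℕ) < k ∨ (j : ℕ) < k → A i j = 0) :
    A.submatrix (finSumFinSubEquiv hk) (finSumFinSubEquiv hk) =
      fromBlocks 0 0 0 (A.submatrix (lowerEmbed n k hk) (lowerEmbed n k hk)) := by
  ext (i | i) (j | j) <;> simp [hA, Fin.castLE]

end Reindex

theorem stmt8_general (n k : ℕ) (hk : k ≤ n)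
    (A B : Matrix (Fin n) (Fin n) ℂ)
    (hAzero : ∀ i j : Fin n, (i : ℕ) < k ∨ (j : ℕ) < k → A i j = 0)
    (hBblock : (B.submatrix (Fin.castLE hk) (Fin.castLE hk)).PosDef)
    (hAblock : (A.submatrix (lowerEmbed n k hk) (lowerEmbed n k hk)).PosDef)
    (E : ℝ → Matrix (Fin n) (Fin n) ℂ)
    (hE : Filter.Tendsto E Filter.atTop (nhds 0)) :
    Filter.Tendsto
        (fun L : ℝ => ((L : ℂ) • A + B + E L).det / (L : ℂ) ^ (n - k))
        Filter.atTop
        (nhds ((B.submatrix (Fin.castLE hk) (Fin.castLE hk)).det *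
          (A.submatrix (lowerEmbed n k hk) (lowerEmbed n k hk)).det)) ∧
      ∃ r : ℝ, 0 < r ∧
        (B.submatrix (Fin.castLE hk) (Fin.castLE hk)).det *
            (A.submatrix (lowerEmbed n k hk) (lowerEmbed n k hk)).det = (r : ℂ) := by
  set e := finSumFinSubEquiv hk
  refine ⟨?_, ?_⟩
  · have hBE : Tendsto (fun L ↦ (B + E L).submatrix e e) atTop (𝓝 (B.submatrix e e)) :=
      ((continuous_id.matrix_submatrix e e).tendsto B).comp (by simpa using hE.const_add B)
    have h := tendsto_det_smul_fromBlocks_zero_add_div_pow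
      (RCLike.tendsto_ofReal_atTop_cobounded ℂ)
      (A.submatrix (lowerEmbed n k hk) (lowerEmbed n k hk)) hBE
    rw [toBlocks₁₁_submatrix_finSumFinSubEquiv, Fintype.card_fin] at h
    refine h.congr fun L ↦ ?_
    rw [← submatrix_finSumFinSubEquiv_eq_fromBlocks hk hAzero, ← det_submatrix_equiv_self e]
    simp only [submatrix_add, submatrix_smul, add_assoc]
    rfl -- `RCLike.ofReal` on `ℂ` is the coercion `ℝ → ℂ` up to unfolding
  · obtain ⟨r, hr, hr_eq⟩ :=
      RCLike.pos_iff_exists_ofReal.mp (mul_pos hBblock.det_pos hAblock.det_pos)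
    exact ⟨r, hr, hr_eq.symm⟩

/-- Linear-algebra core of the determinant-of-periods asymptotics: if `A`, `B`
are Hermitian `n × n` matrices with `A i j = 0` whenever `i < k` or `j < k`
(0-based indexing of the first `k` rows/columns), the top-left `k × k` block of
`B` is positive definite, the bottom-right `(n-k) × (n-k)` block of `A` is
positive definite, and `E(L) → 0` as `L → ∞`, then
`det(L·A + B + E(L)) / L^{n-k}` converges to the product of the two block
determinants, a positive real number. -/
theorem stmt8 (n k : ℕ) (hk : k ≤ n)
    (A B : Matrix (Fin n) (Fin n) ℂ)
    (hA : A.IsHermitian) (hB : B.IsHermitian)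
    (hAzero : ∀ i j : Fin n, (i : ℕ) < k ∨ (j : ℕ) < k → A i j = 0)
    (hBblock : (B.submatrix (Fin.castLE hk) (Fin.castLE hk)).PosDef)
    (hAblock : (A.submatrix (lowerEmbed n k hk) (lowerEmbed n k hk)).PosDef)
    (E : ℝ → Matrix (Fin n) (Fin n) ℂ)
    (hE : Filter.Tendsto E Filter.atTop (nhds 0)) :
    Filter.Tendsto
        (fun L : ℝ => ((L : ℂ) • A + B + E L).det / (L : ℂ) ^ (n - k))
        Filter.atTop
        (nhds ((B.submatrix (Fin.castLE hk) (Fin.castLE hk)).det *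
          (A.submatrix (lowerEmbed n k hk) (lowerEmbed n k hk)).det)) ∧
      ∃ r : ℝ, 0 < r ∧
        (B.submatrix (Fin.castLE hk) (Fin.castLE hk)).det *
            (A.submatrix (lowerEmbed n k hk) (lowerEmbed n k hk)).det = (r : ℂ) :=
  stmt8_general n k hk A B hAzero hBblock hAblock E hE
end
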